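/- For any two (−1)-classes L₁, L₂ in the del Pezzo lattice of rank 9 (δ = 8), the intersection number L₁·L₂ belongs to {−1, 0, 1, 2, 3}, and L₁·L₂ = −1 if and only if L₁ = L₂. Moreover, each of the five values −1, 0, 1, 2, 3 is attained by some pair of (−1)-classes. -/
import Mathlib


/-- A class in the del Pezzo lattice of rank `1 + δ`: the pair `(a, b)`
represents `a·ℓ − b₁e₁ − ⋯ − b_δ e_δ`. -/
abbrev Cls (δ : ℕ) : Type := ℤ × (Fin δ → ℤ)

/-- The intersection product: `(a;b)·(a';b') = a a' − Σ bᵢ bᵢ'`. -/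
def ip {δ : ℕ} (x y : Cls δ) : ℤ := x.1 * y.1 - ∑ i, x.2 i * y.2 i

/-- The canonical class `K = −3ℓ + e₁ + ⋯ + e_δ`, i.e. `(−3; −1, …, −1)`. -/
def Kcls (δ : ℕ) : Cls δ := (-3, fun _ => -1)

/-- A conic class: `Q·Q = 0` and `K·Q = −2`. -/
def IsConic {δ : ℕ} (Q : Cls δ) : Prop := ip Q Q = 0 ∧ ip (Kcls δ) Q = -2

/-- A `(−1)`-class: `L·L = −1` and `K·L = −1`. -/
def IsMinusOne {δ : ℕ} (L : Cls δ) : Prop := ip L L = -1 ∧ ip (Kcls δ) L = -1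

/-- Membership in the Weyl group `W_δ`: a ℤ-linear automorphism of the lattice
preserving the intersection form and fixing the canonical class. -/
def IsWeyl {δ : ℕ} (g : Cls δ ≃ₗ[ℤ] Cls δ) : Prop :=
  (∀ x y : Cls δ, ip (g x) (g y) = ip x y) ∧ g (Kcls δ) = Kcls δ


lemma ip_comm {δ : ℕ} (x y : Cls δ) : ip x y = ip y x := by
  simp [ip, mul_comm]

lemma ip_add_left {δ : ℕ} (x y z : Cls δ) : ip (x + y) z = ip x z + ip y z := by
  simp [ip, add_mul, Finset.sum_add_distrib]; ring

lemma ip_add_right {δ : ℕ} (x y z : Cls δ) : ip x (y + z) = ip x y + ip x z := by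
  rw [ip_comm, ip_add_left, ip_comm z x, ip_comm y x]

lemma ip_sub_left {δ : ℕ} (x y z : Cls δ) : ip (x - y) z = ip x z - ip y z := by
  simp [ip, sub_mul, Finset.sum_sub_distrib]; ring

lemma ip_sub_right {δ : ℕ} (x y z : Cls δ) : ip x (y - z) = ip x y - ip x z := by
  rw [ip_comm, ip_sub_left, ip_comm y x, ip_comm z x]

lemma ip_smul_left {δ : ℕ} (c : ℤ) (x y : Cls δ) : ip (c • x) y = c * ip x y := by
  simp only [ip, Prod.smul_fst, Prod.smul_snd, Pi.smul_apply, smul_eq_mul, mul_sub,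
    Finset.mul_sum]
  congr 1
  · ring
  · exact Finset.sum_congr rfl fun i _ => by ring

lemma ip_smul_right {δ : ℕ} (c : ℤ) (x y : Cls δ) : ip x (c • y) = c * ip x y := by
  rw [ip_comm, ip_smul_left, ip_comm]

lemma negdef (x : Cls 8) (hK : ip (Kcls 8) x = 0) :
    ip x x ≤ 0 ∧ (ip x x = 0 → x = 0) := by
  obtain ⟨a, b⟩ := x
  have hK' : ∑ i, b i = 3 * a := by
    simp [ip, Kcls, Finset.sum_neg_distrib] at hK
    linarith
  have hcs : (∑ i, b i) ^ 2 ≤ 8 * ∑ i, (b i) ^ 2 := by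
    have := sq_sum_le_card_mul_sum_sq (s := Finset.univ) (f := b)
    simpa using this
  have hsum : ∑ i, b i * b i = ∑ i, (b i) ^ 2 := by
    simp [sq]
  have hip : ip (a, b) (a, b) = a * a - ∑ i, (b i) ^ 2 := by
    simp [ip, hsum]
  constructor
  · rw [hip]
    have hcs9 : (3 * a) ^ 2 ≤ 8 * ∑ i, (b i) ^ 2 := hK' ▸ hcs
    nlinarith [sq_nonneg a]
  · intro h0
    rw [hip] at h0
    have ha : a = 0 := by
      have hcs9 : (3 * a) ^ 2 ≤ 8 * ∑ i, (b i) ^ 2 := hK' ▸ hcs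
      nlinarith [sq_nonneg a]
    have hb : ∑ i, (b i) ^ 2 = 0 := by rw [ha] at h0; linarith
    have : ∀ i ∈ Finset.univ, (b i) ^ 2 = 0 :=
      (Finset.sum_eq_zero_iff_of_nonneg (fun i _ => sq_nonneg (b i))).1 hb
    have hb' : ∀ i, b i = 0 := fun i => by
      have := this i (Finset.mem_univ i); exact pow_eq_zero_iff (by norm_num) |>.1 this
    ext i
    · exact ha
    · exact hb' i

lemma KK : ip (Kcls 8) (Kcls 8) = 1 := by
  simp [ip, Kcls, Fin.sum_univ_eight]

/-- The intersection number of two (−1)-classes in the rank-9 del Pezzo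
lattice lies in {−1, 0, 1, 2, 3}; it equals −1 iff the classes coincide; and
each of the five values is attained. -/
theorem stmt10 :
    (∀ L₁ L₂ : Cls 8, IsMinusOne L₁ → IsMinusOne L₂ →
      ip L₁ L₂ ∈ ({-1, 0, 1, 2, 3} : Set ℤ) ∧ (ip L₁ L₂ = -1 ↔ L₁ = L₂)) ∧
    (∀ k ∈ ({-1, 0, 1, 2, 3} : Set ℤ),
      ∃ L₁ L₂ : Cls 8, IsMinusOne L₁ ∧ IsMinusOne L₂ ∧ ip L₁ L₂ = k) := by
  constructor
  · intro L₁ L₂ ⟨h11, hK1⟩ ⟨h22, hK2⟩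
    set K := Kcls 8 with hKdef
    set t := ip L₁ L₂ with ht
    have h21 : ip L₂ L₁ = t := by rw [ip_comm]
    have h1K : ip L₁ K = -1 := by rw [ip_comm]; exact hK1
    have h2K : ip L₂ K = -1 := by rw [ip_comm]; exact hK2
    have hKK : ip K K = 1 := KK
    -- the auxiliary vector in K^⊥
    set w : Cls 8 := (-2) • (L₁ + K) - (t - 1) • (L₂ + K) with hw
    have hKw : ip K w = 0 := by
      rw [hw, ip_sub_right, ip_smul_right, ip_smul_right, ip_add_right, ip_add_right,
        hK1, hK2, hKK]
      ring
    have hww : ip w w = -8 + 2 * (t - 1) ^ 2 := by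
      rw [hw]
      simp only [ip_sub_left, ip_sub_right, ip_smul_left, ip_smul_right,
        ip_add_left, ip_add_right, h11, h22, ← ht, h21, hK1, hK2, h1K, h2K, hKK]
      ring
    have hle := (negdef w hKw).1
    rw [hww] at hle
    have hb : -1 ≤ t ∧ t ≤ 3 := by constructor <;> nlinarith
    constructor
    · simp only [Set.mem_insert_iff, Set.mem_singleton_iff]
      omega
    · constructor
      · intro hm1
        set D : Cls 8 := L₁ - L₂ with hD
        have hKD : ip K D = 0 := by rw [hD, ip_sub_right, hK1, hK2]; ring
        have hDD : ip D D = 0 := by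
          rw [hD, ip_sub_left, ip_sub_right, ip_sub_right, h11, h22, ← ht, h21, hm1]
          ring
        have := (negdef D hKD).2 hDD
        rw [hD] at this
        exact sub_eq_zero.1 this
      · intro h; rw [ht, h, h22]
  · intro k hk
    simp only [Set.mem_insert_iff, Set.mem_singleton_iff] at hk
    have hE1 : IsMinusOne ((0, fun j => if j = 0 then -1 else 0) : Cls 8) := by
      constructor <;> simp [ip, IsMinusOne, Kcls, Fin.sum_univ_eight]
    rcases hk with h | h | h | h | h <;> subst h
    · exact ⟨_, _, hE1, hE1, by simp [ip, Fin.sum_univ_eight]⟩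
    · refine ⟨_, (0, fun j => if j = 1 then -1 else 0), hE1, ?_, ?_⟩
      · constructor <;> simp [ip, Kcls, Fin.sum_univ_eight]
      · simp [ip, Fin.sum_univ_eight]
    · refine ⟨_, (1, fun j => if j = 0 ∨ j = 1 then 1 else 0), hE1, ?_, ?_⟩
      · constructor <;> simp [ip, Kcls, Fin.sum_univ_eight]
      · simp [ip, Fin.sum_univ_eight]
    · refine ⟨_, (3, fun j => if j = 0 then 2 else if j = 7 then 0 else 1), hE1, ?_, ?_⟩
      · constructor <;> simp [ip, Kcls, Fin.sum_univ_eight]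
      · simp [ip, Fin.sum_univ_eight]
    · refine ⟨_, (6, fun j => if j = 0 then 3 else 2), hE1, ?_, ?_⟩
      · constructor <;> simp [ip, Kcls, Fin.sum_univ_eight]
      · simp [ip, Fin.sum_univ_eight]
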